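/- arXiv:2305.11097 — 3 statements merged into one kernel-verified Lean document; each statement's English description precedes it below -/
import Mathlib

section
/- For γ₁, γ₂ ∈ ℝ with γ₂ ≠ 0, γ₃ ∈ ℝ^d, define LayerNorm(v; γ) = γ₁ (v − avg(v)) / (‖v − avg(v)‖ + |γ₂|) + γ₃, where avg(v) = ((1/d) Σ_j v_j) · 1. Then for all a, b ∈ ℝ^d with avg(a) = avg(b) = 0, ‖LayerNorm(a; γ) − LayerNorm(b; γ)‖ ≤ 2 (|γ₁|/|γ₂|) ‖a − b‖. -/
noncomputable section

/-- The constant vector whose entries all equal the mean of `v`. -/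
def avg {d : ℕ} (v : EuclideanSpace ℝ (Fin d)) : EuclideanSpace ℝ (Fin d) :=
  WithLp.toLp 2 (fun _ => (∑ j, v j) / d)

/-- LayerNorm(v; γ) = γ₁ (v − avg v) / (‖v − avg v‖ + |γ₂|) + γ₃. -/
def layerNorm {d : ℕ} (γ₁ γ₂ : ℝ) (γ₃ : EuclideanSpace ℝ (Fin d))
    (v : EuclideanSpace ℝ (Fin d)) : EuclideanSpace ℝ (Fin d) :=
  (γ₁ / (‖v - avg v‖ + |γ₂|)) • (v - avg v) + γ₃

/-
The cross term `(‖a‖ + c)⁻¹ • b` splits `(‖a‖ + c)⁻¹ • a - (‖b‖ + c)⁻¹ • b` into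
`(‖a‖ + c)⁻¹ • (a - b)`, of norm at most `‖a - b‖ / c`, and
`((‖a‖ + c)⁻¹ - (‖b‖ + c)⁻¹) • b`, whose norm is `|‖a‖ - ‖b‖| / (‖a‖ + c) · ‖b‖ / (‖b‖ + c)`,
again at most `‖a - b‖ / c` by the reverse triangle inequality and `‖b‖ / (‖b‖ + c) ≤ 1`.
On centered vectors LayerNorm is `γ₁` times this map with `c = |γ₂|`, plus a constant.
-/

lemma abs_inv_add_sub_inv_add_mul_le {x y c : ℝ} (hx : 0 ≤ x) (hy : 0 ≤ y) (hc : 0 < c) :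
    |(x + c)⁻¹ - (y + c)⁻¹| * y ≤ |x - y| / c := by
  have hxc : 0 < x + c := by positivity
  have hyc : 0 < y + c := by positivity
  calc |(x + c)⁻¹ - (y + c)⁻¹| * y = |x - y| / (x + c) * (y / (y + c)) := by
        rw [inv_sub_inv hxc.ne' hyc.ne', abs_div, abs_of_pos (mul_pos hxc hyc), abs_sub_comm,
          add_sub_add_right_eq_sub]
        field_simp
    _ ≤ |x - y| / c * 1 := by
        gcongr
        · linarith
        · rw [div_le_one hyc]; linarith
    _ = |x - y| / c := mul_one _

lemma norm_inv_norm_add_smul_sub_le {E : Type*} [SeminormedAddCommGroup E] [NormedSpace ℝ E]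
    {c : ℝ} (hc : 0 < c) (a b : E) :
    ‖(‖a‖ + c)⁻¹ • a - (‖b‖ + c)⁻¹ • b‖ ≤ 2 / c * ‖a - b‖ := by
  have hac : 0 < ‖a‖ + c := by positivity
  have h_split : (‖a‖ + c)⁻¹ • a - (‖b‖ + c)⁻¹ • b
      = (‖a‖ + c)⁻¹ • (a - b) + ((‖a‖ + c)⁻¹ - (‖b‖ + c)⁻¹) • b := by
    module
  have h_left : ‖(‖a‖ + c)⁻¹ • (a - b)‖ ≤ ‖a - b‖ / c := by
    rw [norm_smul, Real.norm_of_nonneg (inv_nonneg.mpr hac.le), inv_mul_eq_div]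
    gcongr
    linarith [norm_nonneg a]
  have h_right : ‖((‖a‖ + c)⁻¹ - (‖b‖ + c)⁻¹) • b‖ ≤ ‖a - b‖ / c := by
    rw [norm_smul, Real.norm_eq_abs]
    calc |(‖a‖ + c)⁻¹ - (‖b‖ + c)⁻¹| * ‖b‖ ≤ |‖a‖ - ‖b‖| / c :=
          abs_inv_add_sub_inv_add_mul_le (norm_nonneg a) (norm_nonneg b) hc
      _ ≤ ‖a - b‖ / c := by gcongr; exact abs_norm_sub_norm_le a b
  calc ‖(‖a‖ + c)⁻¹ • a - (‖b‖ + c)⁻¹ • b‖ ≤ ‖a - b‖ / c + ‖a - b‖ / c := by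
        rw [h_split]; exact (norm_add_le _ _).trans (add_le_add h_left h_right)
    _ = 2 / c * ‖a - b‖ := by ring

lemma layerNorm_of_avg_eq_zero {d : ℕ} (γ₁ γ₂ : ℝ) (γ₃ : EuclideanSpace ℝ (Fin d))
    {v : EuclideanSpace ℝ (Fin d)} (hv : avg v = 0) :
    layerNorm γ₁ γ₂ γ₃ v = γ₁ • (‖v‖ + |γ₂|)⁻¹ • v + γ₃ := by
  rw [layerNorm, hv, sub_zero, smul_smul, div_eq_mul_inv]

/-- LayerNorm is Lipschitz with constant `2|γ₁|/|γ₂|` on centered vectors. -/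
theorem layerNorm_lipschitz_centered {d : ℕ}
    (γ₁ γ₂ : ℝ) (hγ₂ : γ₂ ≠ 0) (γ₃ : EuclideanSpace ℝ (Fin d))
    (a b : EuclideanSpace ℝ (Fin d))
    (ha : avg a = 0) (hb : avg b = 0) :
    ‖layerNorm γ₁ γ₂ γ₃ a - layerNorm γ₁ γ₂ γ₃ b‖
      ≤ 2 * (|γ₁| / |γ₂|) * ‖a - b‖ := by
  have hγ₂_pos : 0 < |γ₂| := abs_pos.mpr hγ₂
  rw [layerNorm_of_avg_eq_zero γ₁ γ₂ γ₃ ha, layerNorm_of_avg_eq_zero γ₁ γ₂ γ₃ hb,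
    add_sub_add_right_eq_sub, ← smul_sub, norm_smul, Real.norm_eq_abs]
  calc |γ₁| * ‖(‖a‖ + |γ₂|)⁻¹ • a - (‖b‖ + |γ₂|)⁻¹ • b‖ ≤ |γ₁| * (2 / |γ₂| * ‖a - b‖) := by
        gcongr; exact norm_inv_norm_add_smul_sub_le hγ₂_pos a b
    _ = 2 * (|γ₁| / |γ₂|) * ‖a - b‖ := by ring
end
end

section
/- Let s₁,…,s_n and s̃₁,…,s̃_n be real scores with |s_i|, |s̃_i| ≤ C for all i, and s_i = s̃_i for i < n (they differ only in the n-th score). Let a_j and ã_j be the respective softmax weights. Then for every j, |a_j − ã_j| ≤ (2 e^{2C}/n) · 1{j = n} + 2 e^{4C} / n², and consequently Σ_{j=1}^n |a_j − ã_j| ≤ 2 e^{2C}/n + 2 e^{4C}/n. -/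
/-- If two score vectors bounded by `C` differ only in the `i₀`-th score,
then the softmax weights satisfy `|a_j − ã_j| ≤ (2e^{2C}/n)·1{j = i₀} + 2e^{4C}/n²`,
and consequently `Σ_j |a_j − ã_j| ≤ 2e^{2C}/n + 2e^{4C}/n`. -/
theorem softmax_weight_perturbation {n : ℕ} (hn : 0 < n) (C : ℝ)
    (s t : Fin n → ℝ)
    (hs : ∀ i, |s i| ≤ C) (ht : ∀ i, |t i| ≤ C)
    (i₀ : Fin n) (hst : ∀ j, j ≠ i₀ → s j = t j) :
    (∀ j : Fin n,
      |Real.exp (s j) / ∑ i, Real.exp (s i) - Real.exp (t j) / ∑ i, Real.exp (t i)|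
        ≤ (if j = i₀ then 2 * Real.exp (2 * C) / n else 0)
            + 2 * Real.exp (4 * C) / (n : ℝ) ^ 2)
    ∧ ∑ j : Fin n,
        |Real.exp (s j) / ∑ i, Real.exp (s i) - Real.exp (t j) / ∑ i, Real.exp (t i)|
        ≤ 2 * Real.exp (2 * C) / n + 2 * Real.exp (4 * C) / n := by
  have hC : (0:ℝ) ≤ C := le_trans (abs_nonneg _) (hs i₀)
  have hnR : (0:ℝ) < n := by exact_mod_cast hn
  set S := ∑ i, Real.exp (s i) with hSdef
  set T := ∑ i, Real.exp (t i) with hTdef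
  have hub : ∀ (u : Fin n → ℝ), (∀ i, |u i| ≤ C) → ∀ i, Real.exp (u i) ≤ Real.exp C :=
    fun u hu i => Real.exp_le_exp.mpr (le_of_abs_le (hu i))
  have hlb : ∀ (u : Fin n → ℝ), (∀ i, |u i| ≤ C) → ∀ i, Real.exp (-C) ≤ Real.exp (u i) :=
    fun u hu i => Real.exp_le_exp.mpr (neg_le_of_abs_le (hu i))
  have hSlb : (n:ℝ) * Real.exp (-C) ≤ S := by
    calc (n:ℝ) * Real.exp (-C) = ∑ _i : Fin n, Real.exp (-C) := by
          simp [Finset.sum_const, mul_comm]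
      _ ≤ S := Finset.sum_le_sum fun i _ => hlb s hs i
  have hTlb : (n:ℝ) * Real.exp (-C) ≤ T := by
    calc (n:ℝ) * Real.exp (-C) = ∑ _i : Fin n, Real.exp (-C) := by
          simp [Finset.sum_const, mul_comm]
      _ ≤ T := Finset.sum_le_sum fun i _ => hlb t ht i
  have hdpos : (0:ℝ) < (n:ℝ) * Real.exp (-C) := by positivity
  have hSpos : 0 < S := lt_of_lt_of_le hdpos hSlb
  have hTpos : 0 < T := lt_of_lt_of_le hdpos hTlb
  have hTmS : T - S = Real.exp (t i₀) - Real.exp (s i₀) := by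
    rw [hSdef, hTdef, ← Finset.sum_sub_distrib]
    rw [Finset.sum_eq_single i₀]
    · intro j _ hj; rw [hst j hj]; ring
    · intro h; exact absurd (Finset.mem_univ i₀) h
  have habs2 : ∀ x y : Fin n, |Real.exp (t x) - Real.exp (s y)| ≤ 2 * Real.exp C := by
    intro x y
    have h1 := hub t ht x
    have h2 := hub s hs y
    have h3 : (0:ℝ) < Real.exp (t x) := Real.exp_pos _
    have h4 : (0:ℝ) < Real.exp (s y) := Real.exp_pos _
    rw [abs_sub_le_iff]; constructor <;> linarith
  have key : ∀ j : Fin n,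
      |Real.exp (s j) / S - Real.exp (t j) / T|
        ≤ (if j = i₀ then 2 * Real.exp (2 * C) / n else 0)
            + 2 * Real.exp (4 * C) / (n : ℝ) ^ 2 := by
    intro j
    have hsplit : Real.exp (s j) / S - Real.exp (t j) / T
        = (Real.exp (s j) - Real.exp (t j)) / S
          + Real.exp (t j) * (T - S) / (S * T) := by
      field_simp
      ring
    rw [hsplit]
    have hB2 : |Real.exp (t j) * (T - S) / (S * T)| ≤ 2 * Real.exp (4 * C) / (n : ℝ) ^ 2 := by
      rw [abs_div, abs_of_pos (mul_pos hSpos hTpos), abs_mul, hTmS]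
      calc |Real.exp (t j)| * |Real.exp (t i₀) - Real.exp (s i₀)| / (S * T)
          ≤ (Real.exp C * (2 * Real.exp C)) / (((n:ℝ) * Real.exp (-C)) * ((n:ℝ) * Real.exp (-C))) := by
            apply div_le_div₀ (by positivity)
            · apply mul_le_mul _ (habs2 i₀ i₀) (abs_nonneg _) (Real.exp_pos C).le
              rw [abs_of_pos (Real.exp_pos _)]; exact hub t ht j
            · positivity
            · exact mul_le_mul hSlb hTlb hdpos.le hSpos.le
        _ = 2 * Real.exp (4 * C) / (n : ℝ) ^ 2 := by
            have h4 : Real.exp (4 * C) = Real.exp C * Real.exp C * (Real.exp C * Real.exp C) := by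
              rw [show (4:ℝ) * C = C + C + (C + C) by ring, Real.exp_add, Real.exp_add]
            rw [h4, Real.exp_neg]
            have := (Real.exp_pos C).ne'
            field_simp
    refine le_trans (abs_add_le _ _) ?_
    by_cases hj : j = i₀
    · rw [if_pos hj]
      have hB1 : |(Real.exp (s j) - Real.exp (t j)) / S| ≤ 2 * Real.exp (2 * C) / n := by
        rw [abs_div, abs_of_pos hSpos]
        calc |Real.exp (s j) - Real.exp (t j)| / S
            ≤ (2 * Real.exp C) / ((n:ℝ) * Real.exp (-C)) := by
              apply div_le_div₀ (by positivity) _ hdpos hSlb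
              rw [abs_sub_comm]; exact habs2 j j
          _ = 2 * Real.exp (2 * C) / n := by
              have h2 : Real.exp (2 * C) = Real.exp C * Real.exp C := by
                rw [two_mul, Real.exp_add]
              rw [h2, Real.exp_neg]
              have := (Real.exp_pos C).ne'
              field_simp
      linarith [hB1, hB2]
    · rw [if_neg hj, zero_add]
      have h0 : Real.exp (s j) - Real.exp (t j) = 0 := by rw [hst j hj]; ring
      rw [h0, zero_div, abs_zero, zero_add]
      exact hB2
  refine ⟨key, ?_⟩
  calc ∑ j : Fin n, |Real.exp (s j) / S - Real.exp (t j) / T|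
      ≤ ∑ j : Fin n, ((if j = i₀ then 2 * Real.exp (2 * C) / n else 0)
            + 2 * Real.exp (4 * C) / (n : ℝ) ^ 2) :=
        Finset.sum_le_sum fun j _ => key j
    _ = 2 * Real.exp (2 * C) / n + (n:ℝ) * (2 * Real.exp (4 * C) / (n : ℝ) ^ 2) := by
        rw [Finset.sum_add_distrib, Finset.sum_ite_eq' Finset.univ i₀, Finset.sum_const]
        simp [mul_comm]
    _ = 2 * Real.exp (2 * C) / n + 2 * Real.exp (4 * C) / n := by
        rw [sq]
        field_simp
end

section
/- Let V_1, V_2, … be i.i.d. random vectors in ℝ^{d+1} with ‖V_i‖ ≤ K, and let W_q, W_v be matrices with operator norm at most 1, v a fixed vector with ‖v‖ ≤ K. Define u'_n = (Σ_{j=1}^n exp(v^T W_q V_j) W_v V_j) / (Σ_{j=1}^n exp(v^T W_q V_j)). Then u'_n → W_v E_{g}[V] almost surely as n → ∞, where g is the exponentially tilted measure dg(s) = exp(v^T W_q s) dP(s) / E_P[exp(v^T W_q V)]. -/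
open MeasureTheory ProbabilityTheory Filter RealInnerProductSpace

/-!
Since `‖V j‖ ≤ K`, the law `P` lives on a compact ball, so every continuous function is
`P`-integrable. Divided by `n`, numerator and denominator become empirical means of such
functions of the i.i.d. `V j`; by the strong law they converge almost surely to
`∫ exp ⟪v, Wq s⟫ • Wv s ∂P` and to `∫ exp ⟪v, Wq s⟫ ∂P > 0`, and `Wv` commutes with the integral.
-/

theorem Continuous.integrable_of_ae_mem_compact {X E : Type*} [MeasurableSpace X]
    [TopologicalSpace X] [OpensMeasurableSpace X] [T2Space X] [NormedAddCommGroup E]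
    {μ : Measure X} [IsFiniteMeasureOnCompacts μ] {f : X → E} (hf : Continuous f)
    {s : Set X} (hs : IsCompact s) (hμs : ∀ᵐ x ∂μ, x ∈ s) : Integrable f μ := by
  rw [← Measure.restrict_eq_self_of_ae_mem hμs]
  exact hf.continuousOn.integrableOn_compact hs

theorem strong_law_ae_comp_of_map_eq {Ω S E : Type*} [MeasurableSpace Ω] [MeasurableSpace S]
    [NormedAddCommGroup E] [NormedSpace ℝ E] [CompleteSpace E] [MeasurableSpace E]
    [BorelSpace E] {μ : Measure Ω} {P : Measure S} {V : ℕ → Ω → S}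
    (hV : ∀ i, AEMeasurable (V i) μ) (hindep : Pairwise fun i j ↦ V i ⟂ᵢ[μ] V j)
    (hlaw : ∀ i, μ.map (V i) = P) {f : S → E} (hf : Measurable f) (hfi : Integrable f P) :
    ∀ᵐ ω ∂μ, Tendsto (fun n : ℕ ↦ (n : ℝ)⁻¹ • ∑ j ∈ Finset.range n, f (V j ω)) atTop
      (nhds (∫ s, f s ∂P)) := by
  have hident : ∀ i, IdentDistrib (V i) (V 0) μ μ :=
    fun i ↦ ⟨hV i, hV 0, by rw [hlaw i, hlaw 0]⟩
  rw [← hlaw 0] at hfi ⊢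
  rw [integral_map (hV 0) hfi.1]
  exact strong_law_ae (fun i ω ↦ f (V i ω)) ((integrable_map_measure hfi.1 (hV 0)).1 hfi)
    (fun i j hij ↦ (hindep hij).comp hf hf) (fun i ↦ (hident i).comp hf)

theorem tendsto_inv_sum_smul_sum_of_tendsto_average {E : Type*} [NormedAddCommGroup E]
    [NormedSpace ℝ E] {a : ℕ → ℝ} {b : ℕ → E} {A : ℝ} {B : E}
    (ha : Tendsto (fun n : ℕ ↦ (n : ℝ)⁻¹ • ∑ j ∈ Finset.range n, a j) atTop (nhds A))
    (hA : A ≠ 0)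
    (hb : Tendsto (fun n : ℕ ↦ (n : ℝ)⁻¹ • ∑ j ∈ Finset.range n, b j) atTop (nhds B)) :
    Tendsto (fun n : ℕ ↦ (∑ j ∈ Finset.range n, a j)⁻¹ • ∑ j ∈ Finset.range n, b j) atTop
      (nhds (A⁻¹ • B)) := by
  refine ((ha.inv₀ hA).smul hb).congr' ?_
  filter_upwards [eventually_ne_atTop 0] with n hn
  have hn' : (n : ℝ) ≠ 0 := Nat.cast_ne_zero.2 hn
  rw [smul_smul, smul_eq_mul, mul_inv, inv_inv, mul_right_comm, mul_inv_cancel₀ hn', one_mul]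

theorem attention_lln_exponential_tilt_general
    {Ω : Type*} [MeasurableSpace Ω] (μ : Measure Ω)
    (d : ℕ)
    (P : Measure (EuclideanSpace ℝ (Fin (d + 1)))) [IsProbabilityMeasure P]
    (V : ℕ → Ω → EuclideanSpace ℝ (Fin (d + 1)))
    (hVindep : iIndepFun V μ)
    (hVlaw : ∀ i, Measure.map (V i) μ = P)
    (K : ℝ) (hVbd : ∀ i ω, ‖V i ω‖ ≤ K)
    (Wq Wv : EuclideanSpace ℝ (Fin (d + 1)) →L[ℝ] EuclideanSpace ℝ (Fin (d + 1)))
    (v : EuclideanSpace ℝ (Fin (d + 1))) :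
    ∀ᵐ ω ∂μ, Tendsto
      (fun n : ℕ =>
        (∑ j ∈ Finset.range n, Real.exp ⟪v, Wq (V j ω)⟫)⁻¹ •
          ∑ j ∈ Finset.range n, Real.exp ⟪v, Wq (V j ω)⟫ • Wv (V j ω))
      atTop
      (nhds (Wv ((∫ s, Real.exp ⟪v, Wq s⟫ ∂P)⁻¹ •
        ∫ s, Real.exp ⟪v, Wq s⟫ • s ∂P))) := by
  have hV : ∀ i, AEMeasurable (V i) μ :=
    fun i ↦ .of_map_ne_zero (by rw [hVlaw i]; exact NeZero.ne P)
  have hP_ball : ∀ᵐ s ∂P, s ∈ Metric.closedBall 0 K := by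
    rw [← hVlaw 0]
    exact (ae_map_iff (hV 0) Metric.isClosed_closedBall.measurableSet).2
      (ae_of_all _ fun ω ↦ mem_closedBall_zero_iff.2 (hVbd 0 ω))
  have hint {E : Type} [NormedAddCommGroup E] {f : EuclideanSpace ℝ (Fin (d + 1)) → E}
      (hf : Continuous f) : Integrable f P :=
    hf.integrable_of_ae_mem_compact (isCompact_closedBall 0 K) hP_ball
  have hindep : Pairwise fun i j ↦ V i ⟂ᵢ[μ] V j := fun i j hij ↦ hVindep.indepFun hij
  have hw : Continuous fun s ↦ Real.exp ⟪v, Wq s⟫ := by fun_prop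
  have hden := strong_law_ae_comp_of_map_eq hV hindep hVlaw hw.measurable (hint hw)
  have hnum := strong_law_ae_comp_of_map_eq hV hindep hVlaw
    (hw.smul Wv.continuous).measurable (hint (hw.smul Wv.continuous))
  have hWv_integral :
      ∫ s, Real.exp ⟪v, Wq s⟫ • Wv s ∂P = Wv (∫ s, Real.exp ⟪v, Wq s⟫ • s ∂P) := by
    simp_rw [← map_smul]
    exact Wv.integral_comp_comm (hint (hw.smul continuous_id))
  filter_upwards [hden, hnum] with ω hden_ω hnum_ω
  rw [map_smul, ← hWv_integral]
  exact tendsto_inv_sum_smul_sum_of_tendsto_average hden_ω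
    (integral_exp_pos (hint hw)).ne' hnum_ω

/-- The attention numerator/denominator averages converge almost surely
to the mean of `W_v V` under the exponentially tilted measure
`dg(s) ∝ exp(⟪v, W_q s⟫) dP(s)`. -/
theorem attention_lln_exponential_tilt
    {Ω : Type*} [MeasurableSpace Ω] (μ : Measure Ω) [IsProbabilityMeasure μ]
    (d : ℕ)
    (P : Measure (EuclideanSpace ℝ (Fin (d + 1)))) [IsProbabilityMeasure P]
    (V : ℕ → Ω → EuclideanSpace ℝ (Fin (d + 1)))
    (hVmeas : ∀ i, Measurable (V i))
    (hVindep : iIndepFun V μ)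
    (hVlaw : ∀ i, Measure.map (V i) μ = P)
    (K : ℝ) (hVbd : ∀ i ω, ‖V i ω‖ ≤ K)
    (Wq Wv : EuclideanSpace ℝ (Fin (d + 1)) →L[ℝ] EuclideanSpace ℝ (Fin (d + 1)))
    (hWq : ‖Wq‖ ≤ 1) (hWv : ‖Wv‖ ≤ 1)
    (v : EuclideanSpace ℝ (Fin (d + 1))) (hv : ‖v‖ ≤ K) :
    ∀ᵐ ω ∂μ, Tendsto
      (fun n : ℕ =>
        (∑ j ∈ Finset.range n, Real.exp ⟪v, Wq (V j ω)⟫)⁻¹ •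
          ∑ j ∈ Finset.range n, Real.exp ⟪v, Wq (V j ω)⟫ • Wv (V j ω))
      atTop
      (nhds (Wv ((∫ s, Real.exp ⟪v, Wq s⟫ ∂P)⁻¹ •
        ∫ s, Real.exp ⟪v, Wq s⟫ • s ∂P))) :=
  attention_lln_exponential_tilt_general μ d P V hVindep hVlaw K hVbd Wq Wv v
end
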